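/- Let φ, ψ be permutations of I = {1,…,n} and let f be an isomorphism mapping 𝔐_{(n,φ)} onto 𝔐_{(n,ψ)}. Assume that either n = 4 and both φ ≠ id and ψ ≠ id contain no cycle of length 2, or n ≥ 5. Then there is a permutation α of I such that either f(B_i) = B_{α(i)} for each i ∈ I, or f(B_i) = A_{α(i)} for each i ∈ I. (i) If f(B_i) = B_{α(i)} for each i, then f(b_i) = b_{α(i)}, f(A_i) = A_{α(i)}, and f(a_i) = a_{α(i)} for each i ∈ I. (ii) If f(B_i) = A_{α(i)} for each i, then f(b_i) = a_{α(i)}, f(A_i) = B_{ψ⁻¹(α(i))}, and f(a_i) = b_{ψ⁻¹(α(i))} for each i ∈ I. Furthermore, in both cases α ∘ φ = ψ ∘ α. -/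

import Mathlib

abbrev MPoint (n : ℕ) := Fin n ⊕ Fin n

/-- The block `A_i = (A \ {a_i}) ∪ {b_i}`. -/
def Ablock (n : ℕ) (i : Fin n) : Set (MPoint n) :=
  Sum.inl '' {j | j ≠ i} ∪ {Sum.inr i}

/-- The block `B_i = (B \ {b_i}) ∪ {a_{φ(i)}}`. -/
def Bblock (n : ℕ) (φ : Equiv.Perm (Fin n)) (i : Fin n) : Set (MPoint n) :=
  Sum.inr '' {j | j ≠ i} ∪ {Sum.inl (φ i)}

def ABlocks (n : ℕ) : Set (Set (MPoint n)) := Set.range (Ablock n)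

def BBlocks (n : ℕ) (φ : Equiv.Perm (Fin n)) : Set (Set (MPoint n)) := Set.range (Bblock n φ)

/-- The blocks of the Möbius `n`-pair `𝔐_{(n,φ)}`; its point set is all of `MPoint n`. -/
def MBlocks (n : ℕ) (φ : Equiv.Perm (Fin n)) : Set (Set (MPoint n)) :=
  ABlocks n ∪ BBlocks n φ

/-!
Every point lies on `n - 1` blocks of its own kind and on exactly one block of the other
kind, so no point is on two A-blocks and two B-blocks. Pulled back along `f`, this constrains
the set `U` of indices `j` for which `f(B_j)` is an A-block: if `U` is nonempty it has at least
two elements, and if `U` and its complement both do, then each has exactly two elements and is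
`φ`-invariant, so `n = 4` and `φ`, having no 2-cycle, is the identity.

The map `a_i ↦ b_{ψ⁻¹(i)}`, `b_j ↦ a_j` is an automorphism of `𝔐_{(n,ψ)}` exchanging the two
kinds of blocks. Composing `f` with it exchanges `U` and its complement, and reduces the case
`f(B_i) = A_{α(i)}` to the case `f(B_i) = B_{α(i)}`. There the points are recovered from the
blocks as `{b_i} = ⋂_{j ≠ i} B_j` and `{a_i} = ⋂_{j ≠ i} A_j`.
-/

open Equiv Set

lemma Function.Injective.exists_perm_of_forall_mem_range {ι γ : Type*} [Finite ι] {F G : ι → γ}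
    (hF : Function.Injective F) (h : ∀ i, F i ∈ range G) : ∃ α : Perm ι, ∀ i, F i = G (α i) := by
  choose β hβ using h
  have hβ_inj : Function.Injective β := fun i j hij => hF (by rw [← hβ, ← hβ, hij])
  exact ⟨Equiv.ofBijective β (Finite.injective_iff_bijective.mp hβ_inj), fun i => (hβ i).symm⟩

lemma forall_ne_apply_mem_of_forall_ne_mem {X Y ι : Type*} (f : X → Y) {S : ι → Set X}
    {T : ι → Set Y} (α : Perm ι) (h : ∀ j, f '' S j = T (α j)) {p : X} {i : ι}
    (hp : ∀ j ≠ i, p ∈ S j) : ∀ j ≠ α i, f p ∈ T j := by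
  intro j hj
  rw [← α.apply_symm_apply j, ← h]
  exact mem_image_of_mem f (hp _ fun h' => hj (by rw [← h', α.apply_symm_apply]))

lemma Equiv.Perm.two_mem_cycleType_of_apply_apply {α : Type*} [Fintype α] [DecidableEq α]
    {σ : Perm α} {a : α} (ha : σ a ≠ a) (h : σ (σ a) = a) : 2 ∈ σ.cycleType := by
  refine Perm.mem_cycleType_iff.mpr ⟨swap a (σ a), swap a (σ a) * σ,
    by rw [← mul_assoc, swap_mul_self, one_mul], fun x => ?_, Perm.isCycle_swap ha.symm,
    Perm.card_support_swap ha.symm⟩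
  by_cases hx : x = a ∨ x = σ a
  · right
    rcases hx with rfl | rfl <;> simp [h]
  · left
    push Not at hx
    exact swap_apply_of_ne_of_ne hx.1 hx.2

lemma Equiv.Perm.apply_eq_self_of_mapsTo {α : Type*} [Fintype α] [DecidableEq α] {σ : Perm α}
    (h2 : 2 ∉ σ.cycleType) {s : Set α} (hs : MapsTo σ s s) (hcard : s.ncard ≤ 2) {a : α}
    (ha : a ∈ s) : σ a = a := by
  by_contra hne
  have hσσ : σ (σ a) ≠ σ a := fun h => hne (σ.injective h)
  refine h2 (two_mem_cycleType_of_apply_apply hne ?_)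
  by_contra h
  have := (two_lt_ncard_iff).mpr ⟨a, σ a, σ (σ a), ha, hs ha, hs (hs ha), Ne.symm hne, Ne.symm h,
    hσσ.symm⟩
  omega

section Blocks

variable {n : ℕ} {φ : Perm (Fin n)}

@[simp] lemma inl_mem_Ablock {k i : Fin n} : (Sum.inl k : MPoint n) ∈ Ablock n i ↔ k ≠ i := by
  simp [Ablock]

@[simp] lemma inr_mem_Ablock {k i : Fin n} : (Sum.inr k : MPoint n) ∈ Ablock n i ↔ k = i := by
  simp [Ablock]

@[simp] lemma inl_mem_Bblock {k j : Fin n} : (Sum.inl k : MPoint n) ∈ Bblock n φ j ↔ k = φ j := by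
  simp [Bblock]

@[simp] lemma inr_mem_Bblock {k j : Fin n} : (Sum.inr k : MPoint n) ∈ Bblock n φ j ↔ k ≠ j := by
  simp [Bblock]

lemma Ablock_mem_MBlocks {i : Fin n} : Ablock n i ∈ MBlocks n φ := Or.inl ⟨i, rfl⟩

lemma Bblock_mem_MBlocks {j : Fin n} : Bblock n φ j ∈ MBlocks n φ := Or.inr ⟨j, rfl⟩

lemma Fin.exists_ne_notMem_notMem {s : Finset (Fin n)} (hs : s.card + 2 ≤ n) :
    ∃ c d, c ≠ d ∧ c ∉ s ∧ d ∉ s := by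
  have : 1 < sᶜ.card := by rw [Finset.card_compl, Fintype.card_fin]; omega
  obtain ⟨c, hc, d, hd, hcd⟩ := Finset.one_lt_card.mp this
  exact ⟨c, d, hcd, Finset.mem_compl.mp hc, Finset.mem_compl.mp hd⟩

lemma Ablock_injective : Function.Injective (Ablock n) := fun i j h => by
  have : (Sum.inr i : MPoint n) ∈ Ablock n j := h ▸ inr_mem_Ablock.mpr rfl
  simpa using this

lemma Bblock_injective : Function.Injective (Bblock n φ) := fun i j h => by
  by_contra hij
  have : (Sum.inr j : MPoint n) ∈ Bblock n φ j := h ▸ inr_mem_Bblock.mpr (Ne.symm hij)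
  simp at this

lemma Ablock_ne_Bblock (hn : 3 ≤ n) (i j : Fin n) : Ablock n i ≠ Bblock n φ j := by
  intro h
  obtain ⟨c, d, hcd, hc, hd⟩ := Fin.exists_ne_notMem_notMem (s := {i}) (by simpa using hn)
  have hc' : (Sum.inl c : MPoint n) ∈ Bblock n φ j := h ▸ by simpa using hc
  have hd' : (Sum.inl d : MPoint n) ∈ Bblock n φ j := h ▸ by simpa using hd
  simp only [inl_mem_Bblock] at hc' hd'
  exact hcd (hc'.trans hd'.symm)

lemma notMem_BBlocks_of_mem_ABlocks (hn : 3 ≤ n) {X : Set (MPoint n)} (hX : X ∈ ABlocks n) :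
    X ∉ BBlocks n φ := by
  rintro ⟨j, rfl⟩
  obtain ⟨i, hi⟩ := hX
  exact Ablock_ne_Bblock hn i j hi

lemma eq_inl_of_forall_ne_mem_Ablock (hn : 3 ≤ n) {p : MPoint n} {i : Fin n}
    (hp : ∀ j ≠ i, p ∈ Ablock n j) : p = Sum.inl i := by
  obtain ⟨c, d, hcd, hc, hd⟩ := Fin.exists_ne_notMem_notMem (s := {i}) (by simpa using hn)
  rw [Finset.mem_singleton] at hc hd
  cases p with
  | inl k => simpa using mt (hp k) (by simp)
  | inr k =>
    have hkc := hp c hc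
    have hkd := hp d hd
    simp only [inr_mem_Ablock] at hkc hkd
    exact absurd (hkc.symm.trans hkd) hcd

lemma eq_inr_of_forall_ne_mem_Bblock (hn : 3 ≤ n) {p : MPoint n} {i : Fin n}
    (hp : ∀ j ≠ i, p ∈ Bblock n φ j) : p = Sum.inr i := by
  obtain ⟨c, d, hcd, hc, hd⟩ := Fin.exists_ne_notMem_notMem (s := {i}) (by simpa using hn)
  rw [Finset.mem_singleton] at hc hd
  cases p with
  | inl k =>
    have hkc := hp c hc
    have hkd := hp d hd
    simp only [inl_mem_Bblock] at hkc hkd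
    exact absurd (φ.injective (hkc.symm.trans hkd)) hcd
  | inr k => simpa using mt (hp k) (by simp)

lemma eq_or_eq_of_mem_ABlocks_of_mem_BBlocks {q : MPoint n} {X₁ X₂ Y₁ Y₂ : Set (MPoint n)}
    (hX₁ : X₁ ∈ ABlocks n) (hX₂ : X₂ ∈ ABlocks n) (hY₁ : Y₁ ∈ BBlocks n φ)
    (hY₂ : Y₂ ∈ BBlocks n φ) (hq₁ : q ∈ X₁) (hq₂ : q ∈ X₂) (hq₃ : q ∈ Y₁) (hq₄ : q ∈ Y₂) :
    X₁ = X₂ ∨ Y₁ = Y₂ := by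
  obtain ⟨i₁, rfl⟩ := hX₁
  obtain ⟨i₂, rfl⟩ := hX₂
  obtain ⟨j₁, rfl⟩ := hY₁
  obtain ⟨j₂, rfl⟩ := hY₂
  cases q with
  | inl k =>
    simp only [inl_mem_Bblock] at hq₃ hq₄
    exact Or.inr (congrArg _ (φ.injective (hq₃.symm.trans hq₄)))
  | inr k =>
    simp only [inr_mem_Ablock] at hq₁ hq₂
    exact Or.inl (congrArg _ (hq₁.symm.trans hq₂))

end Blocks

section Iso

variable {n : ℕ} {φ ψ χ : Perm (Fin n)} {f g : MPoint n ≃ MPoint n}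

def swapAB (ψ : Perm (Fin n)) : MPoint n ≃ MPoint n :=
  (Equiv.sumCongr ψ⁻¹ (Equiv.refl _)).trans (Equiv.sumComm _ _)

@[simp] lemma swapAB_inl (i : Fin n) : swapAB ψ (Sum.inl i) = Sum.inr (ψ⁻¹ i) := rfl

@[simp] lemma swapAB_inr (j : Fin n) : swapAB ψ (Sum.inr j) = Sum.inl j := rfl

@[simp] lemma swapAB_symm_inl (j : Fin n) : (swapAB ψ).symm (Sum.inl j) = Sum.inr j := rfl

@[simp] lemma swapAB_symm_inr (i : Fin n) : (swapAB ψ).symm (Sum.inr i) = Sum.inl (ψ i) := rfl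

lemma image_swapAB_Ablock (i : Fin n) : swapAB ψ '' Ablock n i = Bblock n ψ (ψ⁻¹ i) := by
  ext p
  rw [Equiv.image_eq_preimage_symm]
  cases p <;> simp [Equiv.eq_symm_apply, eq_comm]

lemma image_swapAB_Bblock (j : Fin n) : swapAB ψ '' Bblock n ψ j = Ablock n j := by
  ext p
  rw [Equiv.image_eq_preimage_symm]
  cases p <;> simp

lemma image_swapAB_mem_ABlocks_iff {X : Set (MPoint n)} :
    swapAB ψ '' X ∈ ABlocks n ↔ X ∈ BBlocks n ψ := by
  constructor
  · rintro ⟨j, hj⟩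
    exact ⟨j, image_injective.mpr (swapAB ψ).injective (by rw [image_swapAB_Bblock, hj])⟩
  · rintro ⟨j, rfl⟩
    exact ⟨j, (image_swapAB_Bblock j).symm⟩

lemma image_swapAB_mem_BBlocks_iff {X : Set (MPoint n)} :
    swapAB ψ '' X ∈ BBlocks n ψ ↔ X ∈ ABlocks n := by
  constructor
  · rintro ⟨j, hj⟩
    refine ⟨ψ j, image_injective.mpr (swapAB ψ).injective ?_⟩
    rw [image_swapAB_Ablock]
    simpa using hj
  · rintro ⟨i, rfl⟩
    exact ⟨ψ⁻¹ i, (image_swapAB_Ablock i).symm⟩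

lemma image_trans_swapAB_mem_ABlocks_iff {X : Set (MPoint n)} :
    (f.trans (swapAB ψ)) '' X ∈ ABlocks n ↔ f '' X ∈ BBlocks n ψ := by
  rw [coe_trans, image_comp, image_swapAB_mem_ABlocks_iff]

lemma image_trans_swapAB_mem_BBlocks_iff {X : Set (MPoint n)} :
    (f.trans (swapAB ψ)) '' X ∈ BBlocks n ψ ↔ f '' X ∈ ABlocks n := by
  rw [coe_trans, image_comp, image_swapAB_mem_BBlocks_iff]

def IsMobiusIso (φ ψ : Perm (Fin n)) (f : MPoint n ≃ MPoint n) : Prop :=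
  ∀ S : Set (MPoint n), S ∈ MBlocks n φ ↔ f '' S ∈ MBlocks n ψ

lemma IsMobiusIso.trans (hf : IsMobiusIso φ ψ f) (hg : IsMobiusIso ψ χ g) :
    IsMobiusIso φ χ (f.trans g) := fun S => by
  rw [hf, hg, coe_trans, image_comp]

lemma isMobiusIso_swapAB : IsMobiusIso ψ ψ (swapAB ψ) := fun S => by
  simp only [MBlocks, mem_union, image_swapAB_mem_ABlocks_iff, image_swapAB_mem_BBlocks_iff,
    or_comm]

lemma IsMobiusIso.image_mem_ABlocks_or_BBlocks (hf : IsMobiusIso φ ψ f) {X : Set (MPoint n)}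
    (hX : X ∈ MBlocks n φ) : f '' X ∈ ABlocks n ∨ f '' X ∈ BBlocks n ψ :=
  (hf X).mp hX

lemma IsMobiusIso.exists_image_eq_Ablock (hf : IsMobiusIso φ ψ f) (m : Fin n) :
    ∃ X ∈ MBlocks n φ, f '' X = Ablock n m :=
  ⟨f.symm '' Ablock n m, (hf _).mpr (by rw [f.image_symm_image]; exact Ablock_mem_MBlocks),
    f.image_symm_image _⟩

end Iso

section Dichotomy

variable {n : ℕ} {φ ψ : Perm (Fin n)} {f : MPoint n ≃ MPoint n}

def BtoA (φ : Perm (Fin n)) (f : MPoint n ≃ MPoint n) : Set (Fin n) :=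
  {j | f '' Bblock n φ j ∈ ABlocks n}

def BtoB (φ ψ : Perm (Fin n)) (f : MPoint n ≃ MPoint n) : Set (Fin n) :=
  {j | f '' Bblock n φ j ∈ BBlocks n ψ}

lemma BtoA_trans_swapAB : BtoA φ (f.trans (swapAB ψ)) = BtoB φ ψ f :=
  ext fun _ => image_trans_swapAB_mem_ABlocks_iff

lemma BtoB_trans_swapAB : BtoB φ ψ (f.trans (swapAB ψ)) = BtoA φ f :=
  ext fun _ => image_trans_swapAB_mem_BBlocks_iff

lemma IsMobiusIso.mem_BtoA_or_mem_BtoB (hf : IsMobiusIso φ ψ f) (j : Fin n) :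
    j ∈ BtoA φ f ∨ j ∈ BtoB φ ψ f :=
  hf.image_mem_ABlocks_or_BBlocks Bblock_mem_MBlocks

lemma ne_of_mem_BtoA_of_mem_BtoB (hn : 3 ≤ n) {u w : Fin n} (hu : u ∈ BtoA φ f)
    (hw : w ∈ BtoB φ ψ f) : u ≠ w := by
  rintro rfl
  exact notMem_BBlocks_of_mem_ABlocks hn hu hw

lemma eq_or_eq_of_image_mem_ABlocks_of_image_mem_BBlocks {p : MPoint n}
    {S₁ S₂ T₁ T₂ : Set (MPoint n)} (hS₁ : f '' S₁ ∈ ABlocks n) (hS₂ : f '' S₂ ∈ ABlocks n)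
    (hT₁ : f '' T₁ ∈ BBlocks n ψ) (hT₂ : f '' T₂ ∈ BBlocks n ψ)
    (hp₁ : p ∈ S₁) (hp₂ : p ∈ S₂) (hp₃ : p ∈ T₁) (hp₄ : p ∈ T₂) : S₁ = S₂ ∨ T₁ = T₂ :=
  (eq_or_eq_of_mem_ABlocks_of_mem_BBlocks hS₁ hS₂ hT₁ hT₂ (mem_image_of_mem f hp₁)
    (mem_image_of_mem f hp₂) (mem_image_of_mem f hp₃) (mem_image_of_mem f hp₄)).imp
    (fun h => image_injective.mpr f.injective h) (fun h => image_injective.mpr f.injective h)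

lemma ncard_BtoA_le_two (hn : 3 ≤ n) (hW : (BtoB φ ψ f).Nontrivial) : (BtoA φ f).ncard ≤ 2 := by
  by_contra! h
  obtain ⟨a, b, c, ha, hb, hc, hab, hac, hbc⟩ := (two_lt_ncard_iff).mp h
  obtain ⟨w₁, hw₁, w₂, hw₂, hw⟩ := hW
  rcases eq_or_eq_of_image_mem_ABlocks_of_image_mem_BBlocks hb hc hw₁ hw₂ (p := Sum.inr a)
    (by simpa using hab) (by simpa using hac) (by simpa using ne_of_mem_BtoA_of_mem_BtoB hn ha hw₁)
    (by simpa using ne_of_mem_BtoA_of_mem_BtoB hn ha hw₂) with h | h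
  · exact hbc (Bblock_injective h)
  · exact hw (Bblock_injective h)

lemma ncard_BtoB_le_two (hn : 3 ≤ n) (hU : (BtoA φ f).Nontrivial) :
    (BtoB φ ψ f).ncard ≤ 2 := by
  rw [← BtoA_trans_swapAB (ψ := ψ)]
  exact ncard_BtoA_le_two hn (by rwa [BtoB_trans_swapAB])

/-- Through the point `b_k` pass `A_k` and the `B_j`, `j ≠ k`. -/
lemma IsMobiusIso.image_Ablock_mem_BBlocks (hf : IsMobiusIso φ ψ f) (hn : 3 ≤ n)
    {k u w₁ w₂ : Fin n} (hu : u ∈ BtoA φ f) (hw₁ : w₁ ∈ BtoB φ ψ f) (hw₂ : w₂ ∈ BtoB φ ψ f)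
    (huk : u ≠ k) (hw₁k : w₁ ≠ k) (hw₂k : w₂ ≠ k) (hw : w₁ ≠ w₂) :
    f '' Ablock n k ∈ BBlocks n ψ := by
  refine (hf.image_mem_ABlocks_or_BBlocks Ablock_mem_MBlocks).resolve_left fun hk => ?_
  rcases eq_or_eq_of_image_mem_ABlocks_of_image_mem_BBlocks hk hu hw₁ hw₂ (p := Sum.inr k)
    (by simp) (by simpa using huk.symm) (by simpa using hw₁k.symm) (by simpa using hw₂k.symm)
    with h | h
  · exact Ablock_ne_Bblock hn _ _ h
  · exact hw (Bblock_injective h)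

lemma IsMobiusIso.image_Ablock_mem_ABlocks (hf : IsMobiusIso φ ψ f) (hn : 3 ≤ n)
    {k w u₁ u₂ : Fin n} (hw : w ∈ BtoB φ ψ f) (hu₁ : u₁ ∈ BtoA φ f) (hu₂ : u₂ ∈ BtoA φ f)
    (hwk : w ≠ k) (hu₁k : u₁ ≠ k) (hu₂k : u₂ ≠ k) (hu : u₁ ≠ u₂) :
    f '' Ablock n k ∈ ABlocks n := by
  have := (hf.trans isMobiusIso_swapAB).image_Ablock_mem_BBlocks hn
    (by rwa [BtoA_trans_swapAB]) (by rwa [BtoB_trans_swapAB]) (by rwa [BtoB_trans_swapAB])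
    hwk hu₁k hu₂k hu
  rwa [image_trans_swapAB_mem_BBlocks_iff] at this

/-- If `B_x` goes to an A-block but `B_{φ x}` does not, two blocks of each kind would pass
through the image of `a_{φ x}`. -/
lemma IsMobiusIso.mapsTo_BtoA (hf : IsMobiusIso φ ψ f) (hn : 3 ≤ n)
    (hU : (BtoA φ f).Nontrivial) (hW : (BtoB φ ψ f).Nontrivial) :
    MapsTo φ (BtoA φ f) (BtoA φ f) := by
  intro x hx
  by_contra hφx
  replace hφx := (hf.mem_BtoA_or_mem_BtoB (φ x)).resolve_left hφx
  obtain ⟨v, hv, hvx⟩ := hW.exists_ne (φ x)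
  obtain ⟨v', hv', hv'v⟩ := hW.exists_ne v
  obtain ⟨u₁, hu₁, u₂, hu₂, hu⟩ := hU
  have hAv := hf.image_Ablock_mem_ABlocks hn hv' hu₁ hu₂ hv'v
    (ne_of_mem_BtoA_of_mem_BtoB hn hu₁ hv) (ne_of_mem_BtoA_of_mem_BtoB hn hu₂ hv) hu
  have hAu₁ := hf.image_Ablock_mem_BBlocks hn hu₂ hv hv' hu.symm
    (ne_of_mem_BtoA_of_mem_BtoB hn hu₁ hv).symm (ne_of_mem_BtoA_of_mem_BtoB hn hu₁ hv').symm
    hv'v.symm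
  have hAu₂ := hf.image_Ablock_mem_BBlocks hn hu₁ hv hv' hu
    (ne_of_mem_BtoA_of_mem_BtoB hn hu₂ hv).symm (ne_of_mem_BtoA_of_mem_BtoB hn hu₂ hv').symm
    hv'v.symm
  rcases eq_or_eq_of_image_mem_ABlocks_of_image_mem_BBlocks hx hAv hAu₁ hAu₂
    (p := Sum.inl (φ x)) (by simp) (by simpa using hvx.symm)
    (by simpa using (ne_of_mem_BtoA_of_mem_BtoB hn hu₁ hφx).symm)
    (by simpa using (ne_of_mem_BtoA_of_mem_BtoB hn hu₂ hφx).symm) with h | h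
  · exact Ablock_ne_Bblock hn _ _ h.symm
  · exact hu (Ablock_injective h)

lemma IsMobiusIso.mapsTo_BtoB (hf : IsMobiusIso φ ψ f) (hn : 3 ≤ n)
    (hU : (BtoA φ f).Nontrivial) (hW : (BtoB φ ψ f).Nontrivial) :
    MapsTo φ (BtoB φ ψ f) (BtoB φ ψ f) := by
  rw [← BtoA_trans_swapAB (ψ := ψ)]
  exact (hf.trans isMobiusIso_swapAB).mapsTo_BtoA hn (by rwa [BtoA_trans_swapAB])
    (by rwa [BtoB_trans_swapAB])

/-- If only `B_u` went to an A-block, every A-block of `𝔐_{(n,ψ)}` would be the image of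
`A_u` or `B_u`. -/
lemma IsMobiusIso.nontrivial_BtoA (hf : IsMobiusIso φ ψ f) (hn : 4 ≤ n)
    (hU : (BtoA φ f).Nonempty) : (BtoA φ f).Nontrivial := by
  obtain ⟨u, hu⟩ := hU
  by_contra hU'
  have hB : ∀ j ≠ u, j ∈ BtoB φ ψ f := fun j hj =>
    (hf.mem_BtoA_or_mem_BtoB j).resolve_left fun h => hU' ⟨u, hu, j, h, hj.symm⟩
  have hA : ∀ k ≠ u, f '' Ablock n k ∈ BBlocks n ψ := by
    intro k hk
    obtain ⟨c, d, hcd, hc, hd⟩ := Fin.exists_ne_notMem_notMem (s := {k, u})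
      (by have := Finset.card_le_two (a := k) (b := u); omega)
    simp only [Finset.mem_insert, Finset.mem_singleton, not_or] at hc hd
    exact hf.image_Ablock_mem_BBlocks (by omega) hu (hB c hc.2) (hB d hd.2) hk.symm hc.1 hd.1 hcd
  have hpre : ∀ X ∈ MBlocks n φ, f '' X ∈ ABlocks n → X = Ablock n u ∨ X = Bblock n φ u := by
    rintro X (⟨i, rfl⟩ | ⟨j, rfl⟩) hX
    · refine Or.inl (congrArg _ (not_not.mp fun hi => ?_))
      exact notMem_BBlocks_of_mem_ABlocks (by omega) hX (hA i hi)
    · refine Or.inr (congrArg _ (not_not.mp fun hj => ?_))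
      exact notMem_BBlocks_of_mem_ABlocks (by omega) hX (hB j hj)
  classical
  choose X hX hXm using hf.exists_image_eq_Ablock
  have := Finset.card_le_card_of_injOn (s := Finset.univ) (t := {Ablock n u, Bblock n φ u}) X
    (fun m _ => by simpa using hpre _ (hX m) (hXm m ▸ ⟨m, rfl⟩))
    (fun m _ m' _ h => Ablock_injective (by rw [← hXm, ← hXm, h]))
  have := Finset.card_le_two (a := Ablock n u) (b := Bblock n φ u)
  simp only [Finset.card_univ, Fintype.card_fin] at *
  omega

lemma IsMobiusIso.nontrivial_BtoB (hf : IsMobiusIso φ ψ f) (hn : 4 ≤ n)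
    (hW : (BtoB φ ψ f).Nonempty) : (BtoB φ ψ f).Nontrivial := by
  rw [← BtoA_trans_swapAB (ψ := ψ)] at hW ⊢
  exact (hf.trans isMobiusIso_swapAB).nontrivial_BtoA hn hW

theorem IsMobiusIso.forall_mem_BtoB_or_forall_mem_BtoA (hf : IsMobiusIso φ ψ f) (hn : 4 ≤ n)
    (hφ : 5 ≤ n ∨ φ ≠ 1 ∧ 2 ∉ φ.cycleType) :
    (∀ j, j ∈ BtoB φ ψ f) ∨ ∀ j, j ∈ BtoA φ f := by
  by_contra! h
  obtain ⟨⟨u, hu⟩, ⟨w, hw⟩⟩ := h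
  have hU := hf.nontrivial_BtoA hn ⟨u, (hf.mem_BtoA_or_mem_BtoB u).resolve_right hu⟩
  have hW := hf.nontrivial_BtoB hn ⟨w, (hf.mem_BtoA_or_mem_BtoB w).resolve_left hw⟩
  have hcover : BtoA φ f ∪ BtoB φ ψ f = univ := eq_univ_of_forall hf.mem_BtoA_or_mem_BtoB
  have hn4 : n ≤ 4 :=
    calc n = (univ : Set (Fin n)).ncard := by simp
      _ ≤ (BtoA φ f).ncard + (BtoB φ ψ f).ncard := hcover ▸ ncard_union_le _ _
      _ ≤ 2 + 2 := add_le_add (ncard_BtoA_le_two (by omega) hW) (ncard_BtoB_le_two (by omega) hU)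
  obtain ⟨hφ1, hφ2⟩ := hφ.resolve_left (by omega)
  refine hφ1 (Equiv.ext fun x => ?_)
  rcases hf.mem_BtoA_or_mem_BtoB x with hx | hx
  · exact Perm.apply_eq_self_of_mapsTo hφ2 (hf.mapsTo_BtoA (by omega) hU hW)
      (ncard_BtoA_le_two (by omega) hW) hx
  · exact Perm.apply_eq_self_of_mapsTo hφ2 (hf.mapsTo_BtoB (by omega) hU hW)
      (ncard_BtoB_le_two (by omega) hU) hx

end Dichotomy

section Form

variable {n : ℕ} {φ ψ : Perm (Fin n)} {f : MPoint n ≃ MPoint n} {α : Perm (Fin n)}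

lemma apply_inr_eq_of_image_Bblock (hn : 3 ≤ n) (hα : ∀ j, f '' Bblock n φ j = Bblock n ψ (α j))
    (i : Fin n) : f (Sum.inr i) = Sum.inr (α i) :=
  eq_inr_of_forall_ne_mem_Bblock hn
    (forall_ne_apply_mem_of_forall_ne_mem f α hα fun _ hj => by simpa using hj.symm)

lemma apply_inl_eq_of_image_Ablock (hn : 3 ≤ n) (hα : ∀ i, f '' Ablock n i = Ablock n (α i))
    (i : Fin n) : f (Sum.inl i) = Sum.inl (α i) :=
  eq_inl_of_forall_ne_mem_Ablock hn
    (forall_ne_apply_mem_of_forall_ne_mem f α hα fun _ hj => by simpa using hj.symm)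

lemma IsMobiusIso.image_Ablock_eq_of_image_Bblock (hf : IsMobiusIso φ ψ f) (hn : 3 ≤ n)
    (hα : ∀ j, f '' Bblock n φ j = Bblock n ψ (α j)) (i : Fin n) :
    f '' Ablock n i = Ablock n (α i) := by
  rcases hf.image_mem_ABlocks_or_BBlocks (Ablock_mem_MBlocks (i := i)) with ⟨m, hm⟩ | ⟨m, hm⟩
  · have : f (Sum.inr i) ∈ Ablock n m := hm ▸ mem_image_of_mem f (by simp)
    rw [apply_inr_eq_of_image_Bblock hn hα, inr_mem_Ablock] at this
    rw [← hm, this]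
  · refine absurd (image_injective.mpr f.injective ?_) (Ablock_ne_Bblock (φ := φ) hn i (α⁻¹ m))
    rw [hα]
    simpa using hm.symm

lemma mul_eq_mul_of_image_Bblock (hα : ∀ j, f '' Bblock n φ j = Bblock n ψ (α j))
    (hinl : ∀ i, f (Sum.inl i) = Sum.inl (α i)) : α * φ = ψ * α := by
  ext i
  have : f (Sum.inl (φ i)) ∈ Bblock n ψ (α i) := hα i ▸ mem_image_of_mem f (by simp)
  rw [hinl, inl_mem_Bblock] at this
  simp [this]

lemma IsMobiusIso.apply_of_image_Bblock_eq_Bblock (hf : IsMobiusIso φ ψ f) (hn : 3 ≤ n)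
    (hα : ∀ j, f '' Bblock n φ j = Bblock n ψ (α j)) :
    (∀ i, f (Sum.inr i) = Sum.inr (α i) ∧ f '' Ablock n i = Ablock n (α i) ∧
      f (Sum.inl i) = Sum.inl (α i)) ∧ α * φ = ψ * α := by
  have hA := hf.image_Ablock_eq_of_image_Bblock hn hα
  have hinl := apply_inl_eq_of_image_Ablock hn hA
  exact ⟨fun i => ⟨apply_inr_eq_of_image_Bblock hn hα i, hA i, hinl i⟩,
    mul_eq_mul_of_image_Bblock hα hinl⟩

lemma IsMobiusIso.apply_of_image_Bblock_eq_Ablock (hf : IsMobiusIso φ ψ f) (hn : 3 ≤ n)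
    (hα : ∀ j, f '' Bblock n φ j = Ablock n (α j)) :
    (∀ i, f (Sum.inr i) = Sum.inl (α i) ∧ f '' Ablock n i = Bblock n ψ (ψ⁻¹ (α i)) ∧
      f (Sum.inl i) = Sum.inr (ψ⁻¹ (α i))) ∧ α * φ = ψ * α := by
  have hg : ∀ j, (f.trans (swapAB ψ)) '' Bblock n φ j = Bblock n ψ ((ψ⁻¹ * α) j) := fun j => by
    rw [coe_trans, image_comp, hα, image_swapAB_Ablock, Perm.mul_apply]
  obtain ⟨hpts, hconj⟩ := (hf.trans isMobiusIso_swapAB).apply_of_image_Bblock_eq_Bblock hn hg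
  refine ⟨fun i => ?_, ?_⟩
  · obtain ⟨h₁, h₂, h₃⟩ := hpts i
    refine ⟨(swapAB ψ).injective ?_, image_injective.mpr (swapAB ψ).injective ?_,
      (swapAB ψ).injective ?_⟩
    · simpa using h₁
    · rw [image_swapAB_Bblock, ← image_comp, ← coe_trans, h₂, Perm.mul_apply]
    · simpa using h₃
  · calc α * φ = ψ * (ψ⁻¹ * α * φ) := by group
      _ = ψ * α := by rw [hconj, mul_inv_cancel_left]

end Form

/-- Form of an isomorphism f : 𝔐_{(n,φ)} → 𝔐_{(n,ψ)}, when n = 4 and φ,ψ ≠ id contain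
no 2-cycles, or n ≥ 5: there is α ∈ Sₙ with f(B_i) = B_{α(i)} for all i or
f(B_i) = A_{α(i)} for all i, the action on the remaining points/blocks is determined as
stated, and α ∘ φ = ψ ∘ α. -/
theorem stmt12 (n : ℕ) (φ ψ : Equiv.Perm (Fin n))
    (hcase : (n = 4 ∧ φ ≠ 1 ∧ ψ ≠ 1 ∧ 2 ∉ φ.cycleType ∧ 2 ∉ ψ.cycleType) ∨ 5 ≤ n)
    (f : MPoint n ≃ MPoint n)
    (hf : ∀ S : Set (MPoint n), S ∈ MBlocks n φ ↔ ⇑f '' S ∈ MBlocks n ψ) :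
    ∃ α : Equiv.Perm (Fin n),
      ((∀ i, ⇑f '' Bblock n φ i = Bblock n ψ (α i)) ∨
       (∀ i, ⇑f '' Bblock n φ i = Ablock n (α i))) ∧
      ((∀ i, ⇑f '' Bblock n φ i = Bblock n ψ (α i)) →
        ∀ i, f (Sum.inr i) = Sum.inr (α i) ∧
          ⇑f '' Ablock n i = Ablock n (α i) ∧
          f (Sum.inl i) = Sum.inl (α i)) ∧
      ((∀ i, ⇑f '' Bblock n φ i = Ablock n (α i)) →
        ∀ i, f (Sum.inr i) = Sum.inl (α i) ∧
          ⇑f '' Ablock n i = Bblock n ψ (ψ⁻¹ (α i)) ∧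
          f (Sum.inl i) = Sum.inr (ψ⁻¹ (α i))) ∧
      α * φ = ψ * α := by
  have hn : 4 ≤ n := by omega
  have hφ : 5 ≤ n ∨ φ ≠ 1 ∧ 2 ∉ φ.cycleType := by
    rcases hcase with ⟨-, hφ1, -, hφ2, -⟩ | h5
    exacts [Or.inr ⟨hφ1, hφ2⟩, Or.inl h5]
  have hinj : Function.Injective fun j => f '' Bblock n φ j :=
    (image_injective.mpr f.injective).comp Bblock_injective
  let i₀ : Fin n := ⟨0, by omega⟩
  rcases IsMobiusIso.forall_mem_BtoB_or_forall_mem_BtoA hf hn hφ with hB | hA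
  · obtain ⟨α, hα⟩ := hinj.exists_perm_of_forall_mem_range hB
    obtain ⟨hpts, hconj⟩ := IsMobiusIso.apply_of_image_Bblock_eq_Bblock hf (by omega) hα
    refine ⟨α, Or.inl hα, fun _ => hpts, fun h => ?_, hconj⟩
    exact absurd ((h i₀).symm.trans (hα i₀)) (Ablock_ne_Bblock (by omega) _ _)
  · obtain ⟨α, hα⟩ := hinj.exists_perm_of_forall_mem_range hA
    obtain ⟨hpts, hconj⟩ := IsMobiusIso.apply_of_image_Bblock_eq_Ablock hf (by omega) hα
    refine ⟨α, Or.inr hα, fun h => ?_, fun _ => hpts, hconj⟩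
    exact absurd ((hα i₀).symm.trans (h i₀)) (Ablock_ne_Bblock (by omega) _ _)
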